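/- Let A be a normal distributive nearlattice. If every dense α-filter of A contains a dense element, then A is quasicomplemented. -/
import Mathlib


/-- A distributive nearlattice, presented (following Araújo–Kinyon) as a
join-semilattice with top together with its canonical ternary operation
`m x y z = (x ⊔ z) ⊓_z (y ⊔ z)` (the meet taken in the principal filter `[z)`),
satisfying the Araújo–Kinyon identities.  This is equivalent to: every
principal filter is a bounded distributive lattice. -/
class DNearlattice (A : Type*) extends SemilatticeSup A, OrderTop A where
  m : A → A → A → A
  sup_eq_m : ∀ x y : A, x ⊔ y = m x x y
  m_ax2 : ∀ x y : A, m x y x = x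
  m_ax3 : ∀ u w x y z : A,
    m (m x y z) (m y (m u x z) z) w = m w w (m y (m x u z) z)
  m_ax4 : ∀ w x y z : A,
    m x (m y y z) w = m (m x y w) (m x y w) (m x z w)

variable {A : Type*} [DNearlattice A]

/-- The annihilator `a⊤ = {x | x ⊔ a = ⊤}`. -/
def ann (a : A) : Set A := {x : A | x ⊔ a = ⊤}

/-- The annihilator of a set (filter): `F⊤ = {x | ∀ f ∈ F, x ⊔ f = ⊤}`. -/
def annF (F : Set A) : Set A := {x : A | ∀ f ∈ F, x ⊔ f = ⊤}

/-- The double annihilator `a⊤⊤`. -/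
def dann (a : A) : Set A := annF (ann a)

/-- A filter: contains `⊤`, is upward closed, and is closed under existing
binary meets (greatest lower bounds). -/
def IsFil (F : Set A) : Prop :=
  ⊤ ∈ F ∧ (∀ a b : A, a ≤ b → a ∈ F → b ∈ F) ∧
    (∀ a b c : A, a ∈ F → b ∈ F → IsGLB {a, b} c → c ∈ F)

/-- The filter generated by a set: the intersection of all filters containing it. -/
def filGen (X : Set A) : Set A := ⋂₀ {F : Set A | IsFil F ∧ X ⊆ F}

/-- The join of two filters in the lattice of filters. -/
def filJoin (F G : Set A) : Set A := filGen (F ∪ G)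

/-- An ideal: downward closed and closed under joins. -/
def IsIdl (I : Set A) : Prop :=
  (∀ a b : A, a ≤ b → b ∈ I → a ∈ I) ∧ (∀ a b : A, a ∈ I → b ∈ I → a ⊔ b ∈ I)

/-- A prime ideal: a nonempty proper ideal such that whenever an existing
meet `a ∧ b` lies in it, `a` or `b` lies in it. -/
def IsPrimeIdl (P : Set A) : Prop :=
  IsIdl P ∧ P.Nonempty ∧ P ≠ Set.univ ∧
    (∀ a b c : A, IsGLB {a, b} c → c ∈ P → a ∈ P ∨ b ∈ P)

/-- A maximal ideal: a nonempty proper ideal maximal among proper ideals. -/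
def IsMaxIdl (I : Set A) : Prop :=
  IsIdl I ∧ I.Nonempty ∧ I ≠ Set.univ ∧
    (∀ J : Set A, IsIdl J → I ⊆ J → J = I ∨ J = Set.univ)

/-- A prime filter: `a ⊔ b ∈ F` implies `a ∈ F` or `b ∈ F`. -/
def IsPrimeFil (F : Set A) : Prop :=
  IsFil F ∧ ∀ a b : A, a ⊔ b ∈ F → a ∈ F ∨ b ∈ F

/-- An α-filter: a filter containing `a⊤⊤` for each of its elements `a`. -/
def IsAlphaFil (F : Set A) : Prop := IsFil F ∧ ∀ a ∈ F, dann a ⊆ F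

/-- An α-ideal: an ideal `I` such that `I ∩ a⊤⊤ ≠ ∅` implies `a ∈ I`. -/
def IsAlphaIdl (I : Set A) : Prop :=
  IsIdl I ∧ ∀ a : A, (I ∩ dann a).Nonempty → a ∈ I

/-- Quasicomplemented: every `a⊤⊤` is of the form `b⊤`. -/
def Quasicomplemented (B : Type*) [DNearlattice B] : Prop :=
  ∀ a : B, ∃ b : B, dann a = ann b

/-- Normal: `(a ⊔ b)⊤ = a⊤ ⋎ b⊤` for all `a, b`. -/
def NormalNL (B : Type*) [DNearlattice B] : Prop :=
  ∀ a b : B, ann (a ⊔ b) = filJoin (ann a) (ann b)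

/-- Stone: `a⊤ ⋎ a⊤⊤ = A` for all `a`. -/
def StoneNL (B : Type*) [DNearlattice B] : Prop :=
  ∀ a : B, filJoin (ann a) (dann a) = Set.univ



open DNearlattice

private lemma msup (x y : A) : m x x y = x ⊔ y := (sup_eq_m x y).symm

private lemma mBle (x y z : A) : m y (x ⊔ z) z ≤ m x y z := by
  have h := m_ax3 x (m x y z) x y z
  rw [show m x x z = x ⊔ z from msup x z] at h
  rw [m_ax2 (m x y z) (m y (x ⊔ z) z)] at h
  rw [msup (m x y z) (m y (x ⊔ z) z)] at h
  exact sup_eq_left.mp h.symm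

private lemma mL1 (x z : A) : m x z z = z := by
  have hzz : m z z z = z := by rw [msup, sup_idem]
  have hle : m x z z ≤ z := by
    have h := m_ax3 z z z x z
    rw [m_ax2 z x, hzz] at h
    rw [m_ax2 z (m x z z)] at h
    rw [msup z (m x z z)] at h
    exact sup_eq_left.mp h.symm
  have hge : z ≤ m x z z := by
    have h := m_ax3 z (m x z z) x z z
    rw [m_ax2 z x] at h
    rw [m_ax2 z (m x z z)] at h
    rw [hzz] at h
    rw [m_ax2 (m x z z) z] at h
    rw [msup (m x z z) z] at h
    exact le_sup_right.trans_eq h.symm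
  exact le_antisymm hle hge

private lemma mdist (x b c w : A) : m x (b ⊔ c) w = m x b w ⊔ m x c w := by
  have h := m_ax4 w x b c
  rw [show m b b c = b ⊔ c from msup b c,
      show m (m x b w) (m x b w) (m x c w) = m x b w ⊔ m x c w from msup _ _] at h
  exact h

private lemma mcomm (x y z : A) : m x y z = m y x z := by
  have key : ∀ p q : A, m p q z ≤ m q p z := by
    intro p q
    have h1 : m p (q ⊔ z) z = m p q z ⊔ z := by rw [mdist, mL1]
    calc m p q z ≤ m p q z ⊔ z := le_sup_left
      _ = m p (q ⊔ z) z := h1.symm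
      _ ≤ m q p z := mBle q p z
  exact le_antisymm (key x y) (key y x)

private lemma m_base_le (x y z : A) : z ≤ m x y z := by
  have h1 : m x (y ⊔ z) z = m x y z ⊔ z := by rw [mdist, mL1]
  calc z ≤ m x y z ⊔ z := le_sup_right
    _ = m x (y ⊔ z) z := h1.symm
    _ ≤ m y x z := mBle y x z
    _ = m x y z := mcomm y x z

private lemma m_mono2 {b b' : A} (x z : A) (h : b ≤ b') : m x b z ≤ m x b' z := by
  have hd : m x (b ⊔ b') z = m x b z ⊔ m x b' z := mdist x b b' z
  rw [sup_eq_right.mpr h] at hd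
  exact le_sup_left.trans hd.symm.le

private lemma m_mono1 {b b' : A} (y z : A) (h : b ≤ b') : m b y z ≤ m b' y z := by
  rw [mcomm b y z, mcomm b' y z]; exact m_mono2 y z h

private lemma mabs2 (x y z : A) : m x (y ⊔ z) z = m x y z := by
  rw [mdist, mL1, sup_eq_left.mpr (m_base_le x y z)]

private lemma mabs1 (x y z : A) : m (x ⊔ z) y z = m x y z := by
  rw [mcomm (x ⊔ z) y z, mabs2, mcomm]

private lemma mcollapse {P Q : A} (h : P ≤ Q) (w : A) : m Q P w = w ⊔ P := by
  have h3 := m_ax3 P w Q Q P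
  rw [m_ax2 P Q] at h3
  rw [mL1 Q P, mL1 Q P] at h3
  rw [show m Q Q P = Q from by rw [msup, sup_eq_left.mpr h]] at h3
  rw [msup w P] at h3
  exact h3

private lemma mtop (x w : A) : m ⊤ x w = w ⊔ x := mcollapse le_top w

private lemma m_le_sup1 (x y z : A) : m x y z ≤ x ⊔ z := by
  have h := m_mono2 (b := y) (b' := ⊤) x z le_top
  rw [mcomm x ⊤ z, mtop] at h
  exact h.trans_eq (sup_comm z x)

private lemma m_le_sup2 (x y z : A) : m x y z ≤ y ⊔ z := by
  rw [mcomm]; exact m_le_sup1 y x z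

private lemma pair_isGLB_dn {x y c : A} (h1 : c ≤ x) (h2 : c ≤ y)
    (h3 : ∀ w, w ≤ x → w ≤ y → w ≤ c) : IsGLB {x, y} c := by
  constructor
  · rintro t (rfl | rfl)
    · exact h1
    · exact h2
  · intro w hw
    exact h3 w (hw (Set.mem_insert _ _)) (hw (Set.mem_insert_of_mem _ rfl))

private lemma pair_isGLB_dn_le1 {x y c : A} (h : IsGLB {x, y} c) : c ≤ x :=
  h.1 (Set.mem_insert _ _)

private lemma pair_isGLB_dn_le2 {x y c : A} (h : IsGLB {x, y} c) : c ≤ y :=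
  h.1 (Set.mem_insert_of_mem _ rfl)

private lemma pair_isGLB_dn_le {x y c w : A} (h : IsGLB {x, y} c) (hx : w ≤ x) (hy : w ≤ y) :
    w ≤ c := by
  refine h.2 ?_
  rintro t (rfl | rfl)
  · exact hx
  · exact hy

private lemma m_isGLB (x y z : A) : IsGLB {x ⊔ z, y ⊔ z} (m x y z) := by
  refine pair_isGLB_dn (m_le_sup1 x y z) (m_le_sup2 x y z) ?_
  intro w h1 h2
  have e : m x y z = m (x ⊔ z) (y ⊔ z) z := by rw [mabs1, mabs2]
  have hwz : w ⊔ z ≤ m x y z := by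
    rw [e]
    have c1 : m (w ⊔ z) (w ⊔ z) z ≤ m (x ⊔ z) (w ⊔ z) z :=
      m_mono1 _ _ (sup_le h1 le_sup_right)
    have c2 : m (x ⊔ z) (w ⊔ z) z ≤ m (x ⊔ z) (y ⊔ z) z :=
      m_mono2 _ _ (sup_le h2 le_sup_right)
    have c0 : w ⊔ z = m (w ⊔ z) (w ⊔ z) z := by
      rw [msup, sup_assoc, sup_idem]
    exact c0.le.trans (c1.trans c2)
  exact le_sup_left.trans hwz

private lemma m_eq_of_isGLB {p q c : A} (h : IsGLB {p, q} c) : m p q c = c := by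
  have h1 : c ≤ p := pair_isGLB_dn_le1 h
  have h2 : c ≤ q := pair_isGLB_dn_le2 h
  have hm : IsGLB {p, q} (m p q c) := by
    have hg := m_isGLB p q c
    rwa [sup_eq_left.mpr h1, sup_eq_left.mpr h2] at hg
  exact hm.unique h

private lemma m_key {x y z P : A} (hz : z ≤ P) (ht : m x y z ≤ P) : m x y P ≤ P := by
  have hXP : (x ⊔ z) ⊔ P = x ⊔ P := by rw [sup_assoc, sup_eq_right.mpr hz]
  have hYP : (y ⊔ z) ⊔ P = y ⊔ P := by rw [sup_assoc, sup_eq_right.mpr hz]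
  have s1 : m x y P = m (x ⊔ z) (y ⊔ z) P := by
    have g1 := m_isGLB x y P
    have g2 := m_isGLB (x ⊔ z) (y ⊔ z) P
    rw [hXP, hYP] at g2
    exact g1.unique g2
  have s2 : m (x ⊔ z) (y ⊔ z) P = m ((x ⊔ z) ⊔ P) ((y ⊔ z) ⊔ P) z := by
    have g1 := m_isGLB (x ⊔ z) (y ⊔ z) P
    have g2 := m_isGLB ((x ⊔ z) ⊔ P) ((y ⊔ z) ⊔ P) z
    have e1 : ((x ⊔ z) ⊔ P) ⊔ z = (x ⊔ z) ⊔ P :=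
      sup_eq_left.mpr (hz.trans le_sup_right)
    have e2 : ((y ⊔ z) ⊔ P) ⊔ z = (y ⊔ z) ⊔ P :=
      sup_eq_left.mpr (hz.trans le_sup_right)
    rw [e1, e2] at g2
    exact g1.unique g2
  have s3 : m ((x ⊔ z) ⊔ P) ((y ⊔ z) ⊔ P) z
      = m ((x ⊔ z) ⊔ P) (y ⊔ z) z ⊔ m ((x ⊔ z) ⊔ P) P z := mdist _ _ _ _
  have s4 : m ((x ⊔ z) ⊔ P) P z = z ⊔ P := mcollapse le_sup_right z
  have s5 : m ((x ⊔ z) ⊔ P) (y ⊔ z) z = m (y ⊔ z) (x ⊔ z) z ⊔ m (y ⊔ z) P z := by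
    rw [mcomm]; exact mdist (y ⊔ z) (x ⊔ z) P z
  have hYX : m (y ⊔ z) (x ⊔ z) z ≤ P := by
    have : m (y ⊔ z) (x ⊔ z) z = m x y z := by
      rw [mcomm, mabs1, mabs2]
    rw [this]; exact ht
  have hYPz : m (y ⊔ z) P z ≤ P := by
    have := m_le_sup2 (y ⊔ z) P z
    exact this.trans (sup_le le_rfl hz)
  calc m x y P = m ((x ⊔ z) ⊔ P) (y ⊔ z) z ⊔ (z ⊔ P) := by rw [s1, s2, s3, s4]
    _ = (m (y ⊔ z) (x ⊔ z) z ⊔ m (y ⊔ z) P z) ⊔ (z ⊔ P) := by rw [s5]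
    _ ≤ P := sup_le (sup_le hYX hYPz) (sup_le hz le_rfl)

private lemma m_sup_top {p x y z : A} (hx : x ⊔ (p ⊔ z) = ⊤) (hy : y ⊔ (p ⊔ z) = ⊤) :
    p ⊔ m x y z = ⊤ := by
  have hzP : z ≤ p ⊔ m x y z := (m_base_le x y z).trans le_sup_right
  have hkey : m x y (p ⊔ m x y z) ≤ p ⊔ m x y z := m_key hzP le_sup_right
  have hb : z ≤ m x y z := m_base_le x y z
  have h1 : (⊤ : A) ≤ x ⊔ (p ⊔ m x y z) :=
    hx ▸ sup_le_sup_left (sup_le_sup_left hb p) x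
  have h2 : (⊤ : A) ≤ y ⊔ (p ⊔ m x y z) :=
    hy ▸ sup_le_sup_left (sup_le_sup_left hb p) y
  have h3 : (⊤ : A) ≤ m x y (p ⊔ m x y z) :=
    pair_isGLB_dn_le (m_isGLB x y (p ⊔ m x y z)) h1 h2
  exact top_le_iff.mp (h3.trans hkey)

private lemma isGLB_sup_top {e1 e2 c u : A} (hg : IsGLB {e1, e2} c)
    (h1 : u ⊔ e1 = ⊤) (h2 : u ⊔ e2 = ⊤) : u ⊔ c = ⊤ := by
  have hc := m_eq_of_isGLB hg
  rw [← hc]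
  apply m_sup_top
  · exact top_le_iff.mp (h1 ▸ sup_le (le_sup_left.trans le_sup_right) le_sup_left)
  · exact top_le_iff.mp (h2 ▸ sup_le (le_sup_left.trans le_sup_right) le_sup_left)

-- ==== filter / annihilator layer (assumes defs ann, annF, dann, IsFil, filGen exist) ====

private lemma mem_ann_dn {x a : A} : x ∈ ann a ↔ x ⊔ a = ⊤ := Iff.rfl

private lemma ann_mono_dn {p q : A} (h : p ≤ q) : ann p ⊆ ann q := fun z hz =>
  top_le_iff.mp (hz ▸ sup_le_sup_left h z)

private lemma top_mem_ann_dn (a : A) : (⊤ : A) ∈ ann a := top_sup_eq a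

private lemma subset_filGen_dn (X : Set A) : X ⊆ filGen X := fun x hx =>
  Set.mem_sInter.mpr fun _ hF => hF.2 hx

private lemma filGen_subset_dn {X G : Set A} (hG : IsFil G) (hXG : X ⊆ G) :
    filGen X ⊆ G := Set.sInter_subset_of_mem ⟨hG, hXG⟩

private lemma isFil_filGen_dn (X : Set A) : IsFil (filGen X) := by
  refine ⟨?_, ?_, ?_⟩
  · exact Set.mem_sInter.mpr fun F hF => hF.1.1
  · intro p q hpq hp
    exact Set.mem_sInter.mpr fun F hF =>
      hF.1.2.1 p q hpq (Set.mem_sInter.mp hp F hF)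
  · intro p q c hp hq hglb
    exact Set.mem_sInter.mpr fun F hF =>
      hF.1.2.2 p q c (Set.mem_sInter.mp hp F hF) (Set.mem_sInter.mp hq F hF) hglb

/-- The key extraction predicate. -/
private def Qprop (a e : A) : Prop :=
  ∃ b : A, e ≤ b ∧ b ⊔ a = ⊤ ∧ ∀ u : A, u ⊔ (a ⊔ e) = ⊤ → u ⊔ b = ⊤ → u ⊔ e = ⊤

private lemma Qprop_top (a : A) : Qprop a ⊤ :=
  ⟨⊤, le_rfl, top_sup_eq a, fun u _ _ => sup_top_eq u⟩

private lemma Qprop_self (a : A) : Qprop a a :=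
  ⟨⊤, le_top, top_sup_eq a, fun u hu _ => by rwa [sup_idem] at hu⟩

private lemma Qprop_of_ann {a w : A} (hw : w ∈ ann a) : Qprop a w :=
  ⟨w, le_rfl, hw, fun _ _ h2 => h2⟩

private lemma Qprop_isFil (a : A) : IsFil {e : A | Qprop a e} := by
  refine ⟨Qprop_top a, ?_, ?_⟩
  · rintro p q hpq ⟨b, hpb, hba, himp⟩
    refine ⟨b ⊔ q, le_sup_right, ?_, ?_⟩
    · exact top_le_iff.mp (hba ▸ sup_le_sup_right le_sup_left a)
    · intro u h1 h2
      have g1 : (u ⊔ q) ⊔ (a ⊔ p) = ⊤ := by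
        refine top_le_iff.mp (h1 ▸ ?_)
        exact sup_le (le_sup_left.trans le_sup_left)
          (sup_le (le_sup_left.trans le_sup_right)
            (le_sup_right.trans le_sup_left))
      have g2 : (u ⊔ q) ⊔ b = ⊤ := by
        refine top_le_iff.mp (h2 ▸ ?_)
        exact sup_le (le_sup_left.trans le_sup_left)
          (sup_le le_sup_right (le_sup_right.trans le_sup_left))
      have g3 := himp (u ⊔ q) g1 g2
      have : (u ⊔ q) ⊔ p = u ⊔ q := sup_eq_left.mpr (hpq.trans le_sup_right)
      rwa [this] at g3
  · rintro e1 e2 c ⟨b1, h1b, h1a, himp1⟩ ⟨b2, h2b, h2a, himp2⟩ hglb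
    have hc1 : c ≤ e1 := pair_isGLB_dn_le1 hglb
    have hc2 : c ≤ e2 := pair_isGLB_dn_le2 hglb
    refine ⟨DNearlattice.m b1 b2 c, m_base_le b1 b2 c, ?_, ?_⟩
    · have ga : a ⊔ DNearlattice.m b1 b2 c = ⊤ := by
        apply m_sup_top
        · exact top_le_iff.mp (h1a ▸ sup_le le_sup_left (le_sup_left.trans le_sup_right))
        · exact top_le_iff.mp (h2a ▸ sup_le le_sup_left (le_sup_left.trans le_sup_right))
      rwa [sup_comm] at ga
    · intro u hu1 hu2
      have hb1 : DNearlattice.m b1 b2 c ≤ b1 := by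
        have := m_le_sup1 b1 b2 c
        exact this.trans (sup_le le_rfl (hc1.trans h1b))
      have hb2 : DNearlattice.m b1 b2 c ≤ b2 := by
        have := m_le_sup2 b1 b2 c
        exact this.trans (sup_le le_rfl (hc2.trans h2b))
      have hub1 : u ⊔ b1 = ⊤ := top_le_iff.mp (hu2 ▸ sup_le_sup_left hb1 u)
      have hub2 : u ⊔ b2 = ⊤ := top_le_iff.mp (hu2 ▸ sup_le_sup_left hb2 u)
      have hue1 : u ⊔ e1 = ⊤ := by
        refine himp1 u ?_ hub1
        exact top_le_iff.mp (hu1 ▸ sup_le_sup_left (sup_le_sup_left hc1 a) u)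
      have hue2 : u ⊔ e2 = ⊤ := by
        refine himp2 u ?_ hub2
        exact top_le_iff.mp (hu1 ▸ sup_le_sup_left (sup_le_sup_left hc2 a) u)
      exact isGLB_sup_top hglb hue1 hue2

private lemma mem_dann_iff_dn {p z : A} : z ∈ dann p ↔ ann p ⊆ ann z := by
  constructor
  · intro hz f hf
    have h1 : z ⊔ f = ⊤ := hz f hf
    show f ⊔ z = ⊤
    rwa [sup_comm] at h1
  · intro hs f hf
    have h1 : f ⊔ z = ⊤ := hs hf
    show z ⊔ f = ⊤
    rwa [sup_comm] at h1

/-- If `A` is normal and every dense α-filter contains a dense element,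
then `A` is quasicomplemented. -/
theorem stmt9 (hn : NormalNL A)
    (h : ∀ F : Set A, IsAlphaFil F → annF F = {(⊤ : A)} →
      ∃ d ∈ F, ann d = {(⊤ : A)}) :
    Quasicomplemented A := by
  intro a
  -- the filter generated by {a} ∪ a⊤
  have hFfil : IsFil (filGen ({a} ∪ ann a)) := isFil_filGen_dn _
  have haF : a ∈ filGen ({a} ∪ ann a) := subset_filGen_dn _ (Or.inl rfl)
  have hannF : ann a ⊆ filGen ({a} ∪ ann a) := fun w hw => subset_filGen_dn _ (Or.inr hw)
  -- the α-closure
  have hFaFil : IsFil {x : A | ∃ e ∈ filGen ({a} ∪ ann a), ann e ⊆ ann x} := by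
    refine ⟨⟨a, haF, fun z _ => top_le_iff.mp le_sup_right⟩, ?_, ?_⟩
    · rintro p q hpq ⟨e, he, hs⟩
      exact ⟨e, he, hs.trans (ann_mono_dn hpq)⟩
    · rintro x1 x2 c ⟨e1, he1, hs1⟩ ⟨e2, he2, hs2⟩ hglb
      have hc1 : c ≤ x1 := pair_isGLB_dn_le1 hglb
      have hc2 : c ≤ x2 := pair_isGLB_dn_le2 hglb
      have he1c : e1 ⊔ c ∈ filGen ({a} ∪ ann a) := hFfil.2.1 e1 (e1 ⊔ c) le_sup_left he1
      have he2c : e2 ⊔ c ∈ filGen ({a} ∪ ann a) := hFfil.2.1 e2 (e2 ⊔ c) le_sup_left he2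
      have heF : DNearlattice.m e1 e2 c ∈ filGen ({a} ∪ ann a) :=
        hFfil.2.2 (e1 ⊔ c) (e2 ⊔ c) _ he1c he2c (m_isGLB e1 e2 c)
      refine ⟨DNearlattice.m e1 e2 c, heF, ?_⟩
      intro z hz
      have hz' : z ⊔ DNearlattice.m e1 e2 c = ⊤ := hz
      have k1 : z ⊔ x1 = ⊤ := by
        have l1 : (z ⊔ x1) ⊔ e1 = ⊤ := by
          refine top_le_iff.mp (hz' ▸ ?_)
          have hm : DNearlattice.m e1 e2 c ≤ e1 ⊔ x1 :=
            (m_le_sup1 e1 e2 c).trans (sup_le_sup_left hc1 e1)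
          exact sup_le (le_sup_left.trans le_sup_left) (hm.trans
            (sup_le le_sup_right (le_sup_right.trans le_sup_left)))
        have l2 : (z ⊔ x1) ⊔ x1 = ⊤ := hs1 l1
        rwa [sup_assoc, sup_idem] at l2
      have k2 : z ⊔ x2 = ⊤ := by
        have l1 : (z ⊔ x2) ⊔ e2 = ⊤ := by
          refine top_le_iff.mp (hz' ▸ ?_)
          have hm : DNearlattice.m e1 e2 c ≤ e2 ⊔ x2 :=
            (m_le_sup2 e1 e2 c).trans (sup_le_sup_left hc2 e2)
          exact sup_le (le_sup_left.trans le_sup_left) (hm.trans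
            (sup_le le_sup_right (le_sup_right.trans le_sup_left)))
        have l2 : (z ⊔ x2) ⊔ x2 = ⊤ := hs2 l1
        rwa [sup_assoc, sup_idem] at l2
      exact isGLB_sup_top hglb k1 k2
  have hAlpha : IsAlphaFil {x : A | ∃ e ∈ filGen ({a} ∪ ann a), ann e ⊆ ann x} := by
    refine ⟨hFaFil, ?_⟩
    rintro p ⟨e, he, hs⟩ z hz
    exact ⟨e, he, hs.trans (mem_dann_iff_dn.mp hz)⟩
  have hdense : annF {x : A | ∃ e ∈ filGen ({a} ∪ ann a), ann e ⊆ ann x} = {(⊤ : A)} := by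
    ext z
    constructor
    · intro hz
      have h1 : z ⊔ a = ⊤ := hz a ⟨a, haF, subset_rfl⟩
      have h2 : z ∈ {x : A | ∃ e ∈ filGen ({a} ∪ ann a), ann e ⊆ ann x} :=
        ⟨z, hannF h1, subset_rfl⟩
      have h3 : z ⊔ z = ⊤ := hz z h2
      rwa [sup_idem] at h3
    · rintro rfl
      exact fun f _ => top_sup_eq f
  obtain ⟨d, hdFa, hd⟩ := h _ hAlpha hdense
  obtain ⟨e, heFs, hse⟩ := hdFa
  have hanne : ann e = {(⊤ : A)} :=
    Set.Subset.antisymm (hd ▸ hse) (Set.singleton_subset_iff.mpr (top_mem_ann_dn e))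
  have hQ : Qprop a e := by
    refine filGen_subset_dn (Qprop_isFil a) ?_ heFs
    rintro t (ht | ht)
    · rw [show t = a from ht]; exact Qprop_self a
    · exact Qprop_of_ann ht
  obtain ⟨b, heb, hba, himp⟩ := hQ
  refine ⟨b, ?_⟩
  ext z
  constructor
  · intro hz
    exact hz b hba
  · intro hz
    have hzb : z ⊔ b = ⊤ := hz
    intro w hw
    have hu1 : (z ⊔ w) ⊔ (a ⊔ e) = ⊤ := by
      refine top_le_iff.mp (hw ▸ ?_)
      exact sup_le (le_sup_right.trans le_sup_left) (le_sup_left.trans le_sup_right)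
    have hu2 : (z ⊔ w) ⊔ b = ⊤ :=
      top_le_iff.mp (hzb ▸ sup_le (le_sup_left.trans le_sup_left) le_sup_right)
    have h3 : (z ⊔ w) ⊔ e = ⊤ := himp (z ⊔ w) hu1 hu2
    have h4 : z ⊔ w ∈ ann e := h3
    rw [hanne] at h4
    exact h4
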